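/- arXiv:1410.4611 — 6 statements merged into one kernel-verified Lean document; each statement's English description precedes it below -/
import Mathlib

section
/- Let J : ℝ → ℝ be a nonnegative, even, integrable function with ∫ J = 1, J not identically zero, and ∫ J(x) e^{λx} dx < ∞ for all λ > 0. For κ > 0 define c_κ = inf_{λ>0} (1/λ)(∫ J(y) e^{λy} dy − 1 + κ). Then c_κ > 0. -/
/-!
By evenness of `J`, `∫ J(y) e^{λy} dy = ∫ J(y) cosh(λy) dy`, and `cosh t ≥ 1 + t²/2`, so
`∫ J(y) e^{λy} dy - 1 ≥ λ² σ / 2` with `σ = ∫ J(y) y² dy > 0`. Hence every value of the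
infimand is at least `κ/λ + λσ/2 ≥ min κ (σ/2)`.
-/

open MeasureTheory Real Set

lemma one_add_sq_div_two_le_cosh (x : ℝ) : 1 + x ^ 2 / 2 ≤ cosh x := by
  have hsinh : (x / 2) ^ 2 ≤ sinh (x / 2) ^ 2 := by
    rw [← sq_abs (sinh _), abs_sinh, ← sq_abs (x / 2)]
    exact pow_le_pow_left₀ (abs_nonneg _) (self_le_sinh_iff.2 (abs_nonneg _)) 2
  have hcosh : cosh x = 1 + 2 * sinh (x / 2) ^ 2 := by
    have := cosh_two_mul (x / 2)
    rw [mul_div_cancel₀ x two_ne_zero, cosh_sq] at this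
    linarith
  nlinarith

lemma min_le_div_add_mul {a b x : ℝ} (ha : 0 ≤ a) (hb : 0 ≤ b) (hx : 0 < x) :
    min a b ≤ a / x + b * x := by
  rcases le_total x 1 with hx1 | hx1
  · have : a ≤ a / x := le_div_self ha hx hx1
    have : 0 ≤ b * x := by positivity
    linarith [min_le_left a b]
  · have : b ≤ b * x := le_mul_of_one_le_right hb hx1
    have : 0 ≤ a / x := by positivity
    linarith [min_le_right a b]

section EvenKernel

variable {J : ℝ → ℝ} (hJeven : ∀ x, J (-x) = J x)
include hJeven

lemma integrable_mul_exp_neg_of_even {lam : ℝ}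
    (h : Integrable (fun x => J x * exp (lam * x))) :
    Integrable (fun x => J x * exp (-(lam * x))) := by
  simpa [hJeven] using h.comp_neg

lemma integrable_mul_cosh_of_even {lam : ℝ}
    (h : Integrable (fun x => J x * exp (lam * x))) :
    Integrable (fun x => J x * cosh (lam * x)) := by
  simpa [cosh_eq, mul_add, add_div, mul_div_assoc] using
    (h.add (integrable_mul_exp_neg_of_even hJeven h)).div_const 2

lemma integral_mul_exp_eq_integral_mul_cosh {lam : ℝ}
    (h : Integrable (fun x => J x * exp (lam * x))) :
    ∫ x, J x * exp (lam * x) = ∫ x, J x * cosh (lam * x) := by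
  have hneg : ∫ x, J x * exp (-(lam * x)) = ∫ x, J x * exp (lam * x) := by
    rw [← integral_neg_eq_self]
    simp [hJeven]
  simp only [cosh_eq, mul_div_assoc', mul_add]
  rw [integral_div, integral_add h (integrable_mul_exp_neg_of_even hJeven h), hneg]
  ring

end EvenKernel

lemma integrable_mul_sq_of_integrable_mul_cosh {J : ℝ → ℝ} (hJnonneg : ∀ x, 0 ≤ J x)
    (hJ : AEStronglyMeasurable J) (h : Integrable (fun x => J x * cosh x)) :
    Integrable (fun x => J x * x ^ 2) := by
  refine (h.const_mul 2).mono' (hJ.mul (by fun_prop)) (Filter.Eventually.of_forall fun x => ?_)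
  rw [norm_of_nonneg (mul_nonneg (hJnonneg x) (sq_nonneg x))]
  have := one_add_sq_div_two_le_cosh x
  nlinarith [hJnonneg x]

lemma integral_mul_sq_pos {J : ℝ → ℝ} (hJnonneg : ∀ x, 0 ≤ J x) (hJne : ¬ (∀ᵐ x, J x = 0))
    (h : Integrable (fun x => J x * x ^ 2)) : 0 < ∫ x, J x * x ^ 2 := by
  refine (integral_nonneg fun x => mul_nonneg (hJnonneg x) (sq_nonneg x)).lt_of_ne' fun h0 => ?_
  rw [integral_eq_zero_iff_of_nonneg (fun x => mul_nonneg (hJnonneg x) (sq_nonneg x)) h] at h0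
  refine hJne ?_
  filter_upwards [h0, Measure.ae_ne volume 0] with x hx hx0
  simpa [hx0] using hx

lemma integral_add_mul_integral_mul_sq_le_integral_mul_cosh {J : ℝ → ℝ} (hJnonneg : ∀ x, 0 ≤ J x)
    (hJint : Integrable J) (hsq : Integrable (fun x => J x * x ^ 2)) {lam : ℝ}
    (hcosh : Integrable (fun x => J x * cosh (lam * x))) :
    (∫ x, J x) + lam ^ 2 / 2 * ∫ x, J x * x ^ 2 ≤ ∫ x, J x * cosh (lam * x) := by
  rw [← integral_const_mul, ← integral_add hJint (hsq.const_mul _)]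
  refine integral_mono (hJint.add (hsq.const_mul _)) hcosh fun x => ?_
  have := mul_le_mul_of_nonneg_left (one_add_sq_div_two_le_cosh (lam * x)) (hJnonneg x)
  dsimp only
  nlinarith

theorem stmt_0
    (J : ℝ → ℝ)
    (hJnonneg : ∀ x, 0 ≤ J x)
    (hJeven : ∀ x, J (-x) = J x)
    (hJint : Integrable J)
    (hJmass : ∫ x, J x = 1)
    (hJne : ¬ (∀ᵐ x, J x = 0))
    (hJexp : ∀ lam : ℝ, 0 < lam → Integrable (fun x => J x * Real.exp (lam * x)))
    (κ : ℝ) (hκ : 0 < κ) :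
    0 < sInf {c : ℝ | ∃ lam : ℝ, 0 < lam ∧
      c = (1 / lam) * ((∫ y, J y * Real.exp (lam * y)) - 1 + κ)} := by
  have hcosh (lam : ℝ) (hlam : 0 < lam) : Integrable (fun x => J x * cosh (lam * x)) :=
    integrable_mul_cosh_of_even hJeven (hJexp lam hlam)
  have hsq : Integrable (fun x => J x * x ^ 2) :=
    integrable_mul_sq_of_integrable_mul_cosh hJnonneg hJint.aestronglyMeasurable
      (by simpa using hcosh 1 one_pos)
  set σ := ∫ x, J x * x ^ 2
  have hσ : 0 < σ := integral_mul_sq_pos hJnonneg hJne hsq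
  refine (lt_min hκ (half_pos hσ)).trans_le (le_csInf ⟨_, 1, one_pos, rfl⟩ ?_)
  rintro _ ⟨lam, hlam, rfl⟩
  have hmoment := integral_add_mul_integral_mul_sq_le_integral_mul_cosh hJnonneg hJint hsq
    (hcosh lam hlam)
  rw [hJmass, ← integral_mul_exp_eq_integral_mul_cosh hJeven (hJexp lam hlam)] at hmoment
  calc min κ (σ / 2) ≤ κ / lam + σ / 2 * lam := min_le_div_add_mul hκ.le (half_pos hσ).le hlam
    _ = 1 / lam * (lam ^ 2 / 2 * σ + κ) := by field_simp; ring
    _ ≤ _ := by gcongr; linarith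
end

section
/- Let J : ℝ → ℝ be a nonnegative, even, integrable function with ∫ J = 1, J ≢ 0, and all exponential moments finite. For each κ > 0 there exists a unique λ_κ > 0 such that λ_κ ∫ J(y) y e^{λ_κ y} dy − ∫ J(y) e^{λ_κ y} dy + 1 = κ, and λ_κ → 0 as κ → 0⁺. -/
/-!
Since `∫ J = 1`, the left-hand side is `g(λ) = ∫ J(y) ψ(λy) dy` with `ψ(u) = (u - 1)eᵘ + 1`
(`expKernel`).
Now `ψ ≥ 0`, `ψ(0) = 0`, and for `y ≠ 0` the map `λ ↦ ψ(λy)` is strictly increasing on `[0, ∞)`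
(its derivative is `λy²e^{λy}`), so `g` is continuous (dominated convergence) and strictly
increasing on `[0, ∞)` with `g(0) = 0`. As `ψ` is convex on `[0, ∞)`, `ψ(λy) ≥ λψ(y)` for
`λ ≥ 1`, `y ≥ 0`, whence `g(λ) ≥ λ ∫_{y > 0} J(y) ψ(y) dy`; by evenness `J` has positive mass on
`(0, ∞)`, so `g` is unbounded. The intermediate value theorem gives existence, strict monotonicity
uniqueness, and `λ_κ < ε` as soon as `κ < g(ε)`.
-/

open MeasureTheory Real Set Filter Topology

noncomputable def expKernel (u : ℝ) : ℝ := (u - 1) * exp u + 1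

lemma hasDerivAt_expKernel (u : ℝ) : HasDerivAt expKernel (u * exp u) u := by
  refine ((((hasDerivAt_id u).sub_const 1).mul (hasDerivAt_exp u)).add_const 1).congr_deriv ?_
  simp only [id]
  ring

lemma continuous_expKernel : Continuous expKernel := by
  unfold expKernel
  fun_prop

@[simp]
lemma expKernel_zero : expKernel 0 = 0 := by simp [expKernel]

lemma expKernel_nonneg (u : ℝ) : 0 ≤ expKernel u := by
  have h := add_one_le_exp (-u)
  have h' : exp (-u) * exp u = 1 := by rw [← exp_add, neg_add_cancel, exp_zero]
  unfold expKernel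
  nlinarith [exp_pos u]

lemma strictMonoOn_expKernel_mul_right {y : ℝ} (hy : y ≠ 0) :
    StrictMonoOn (fun l => expKernel (l * y)) (Ici 0) := by
  refine strictMonoOn_of_deriv_pos (convex_Ici 0)
    (continuous_expKernel.comp (continuous_mul_const y)).continuousOn fun l hl => ?_
  rw [interior_Ici, mem_Ioi] at hl
  change 0 < deriv (expKernel ∘ fun x => x * y) l
  rw [((hasDerivAt_expKernel (l * y)).comp l (hasDerivAt_mul_const y)).deriv]
  have : 0 < l * y ^ 2 * exp (l * y) := by positivity
  linarith

lemma monotoneOn_expKernel_mul_right (y : ℝ) :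
    MonotoneOn (fun l => expKernel (l * y)) (Ici 0) := by
  rcases eq_or_ne y 0 with rfl | hy
  · simpa using monotoneOn_const
  · exact (strictMonoOn_expKernel_mul_right hy).monotoneOn

lemma expKernel_pos {u : ℝ} (hu : 0 < u) : 0 < expKernel u := by
  simpa using strictMonoOn_expKernel_mul_right hu.ne' self_mem_Ici (mem_Ici.2 zero_le_one) one_pos

lemma convexOn_expKernel : ConvexOn ℝ (Ici 0) expKernel := by
  refine MonotoneOn.convexOn_of_deriv (convex_Ici 0) continuous_expKernel.continuousOn
    (fun u _ => (hasDerivAt_expKernel u).differentiableAt.differentiableWithinAt) ?_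
  rw [funext fun u => (hasDerivAt_expKernel u).deriv, interior_Ici]
  exact fun a ha b _ hab => mul_le_mul hab (exp_le_exp.2 hab) (exp_pos a).le (ha.out.le.trans hab)

lemma mul_expKernel_le {t u : ℝ} (ht : 1 ≤ t) (hu : 0 ≤ u) :
    t * expKernel u ≤ expKernel (t * u) := by
  have ht0 : 0 < t := one_pos.trans_le ht
  have h := convexOn_expKernel.2 self_mem_Ici (mem_Ici.2 (mul_nonneg ht0.le hu))
    (sub_nonneg.2 (inv_le_one_of_one_le₀ ht)) (inv_nonneg.2 ht0.le) (sub_add_cancel 1 t⁻¹)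
  simp only [smul_eq_mul, mul_zero, zero_add, expKernel_zero, inv_mul_cancel_left₀ ht0.ne'] at h
  calc t * expKernel u ≤ t * (t⁻¹ * expKernel (t * u)) := by gcongr
    _ = expKernel (t * u) := mul_inv_cancel_left₀ ht0.ne' _

lemma volume_support_inter_Ioi_ne_zero {J : ℝ → ℝ} (heven : ∀ x, J (-x) = J x)
    (hne : ¬ ∀ᵐ y, J y = 0) : volume ({y | J y ≠ 0} ∩ Ioi 0) ≠ 0 := by
  set S := {y | J y ≠ 0}
  have hneg : S ∩ Iio 0 = Neg.neg ⁻¹' (S ∩ Ioi 0) := by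
    ext x
    simp [S, heven]
  have hcover : S ⊆ (S ∩ Ioi 0) ∪ (S ∩ Iio 0) ∪ {0} := by
    intro x hx
    rcases lt_trichotomy x 0 with h | h | h
    · exact .inl (.inr ⟨hx, h⟩)
    · exact .inr h
    · exact .inl (.inl ⟨hx, h⟩)
  intro h0
  rw [ae_iff] at hne
  refine hne (measure_mono_null hcover (measure_union_null (measure_union_null h0 ?_)
    (measure_singleton 0)))
  rwa [hneg, Measure.measure_preimage_neg]

noncomputable def expKernelIntegral (J : ℝ → ℝ) (l : ℝ) : ℝ := ∫ y, J y * expKernel (l * y)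

section ExpKernelIntegral

variable {J : ℝ → ℝ}

lemma expKernelIntegral_zero : expKernelIntegral J 0 = 0 := by simp [expKernelIntegral]

lemma mul_expKernel_mul_eq (l : ℝ) :
    (fun y => J y * expKernel (l * y))
      = fun y => l * (J y * y * exp (l * y)) - J y * exp (l * y) + J y := by
  funext y
  simp only [expKernel]
  ring

variable {l : ℝ} (hJ : Integrable J) (h₀ : Integrable fun y => J y * exp (l * y))
  (h₁ : Integrable fun y => J y * y * exp (l * y))
include hJ h₀ h₁

lemma integrable_mul_expKernel : Integrable fun y => J y * expKernel (l * y) := by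
  rw [mul_expKernel_mul_eq]
  exact ((h₁.const_mul l).sub h₀).add hJ

lemma expKernelIntegral_eq : expKernelIntegral J l
    = l * (∫ y, J y * y * exp (l * y)) - (∫ y, J y * exp (l * y)) + ∫ y, J y := by
  have h₂ : Integrable fun y => l * (J y * y * exp (l * y)) - J y * exp (l * y) :=
    (h₁.const_mul l).sub h₀
  rw [expKernelIntegral, mul_expKernel_mul_eq, integral_add h₂ hJ,
    integral_sub (h₁.const_mul l) h₀, integral_const_mul]

end ExpKernelIntegral

section Nonneg

variable {J : ℝ → ℝ} (hJ : ∀ y, 0 ≤ J y)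
  (hint : ∀ l, 0 ≤ l → Integrable fun y => J y * expKernel (l * y))
include hJ hint

lemma expKernelIntegral_strictMonoOn (hne : ¬ ∀ᵐ y, J y = 0) :
    StrictMonoOn (expKernelIntegral J) (Ici 0) := by
  intro a ha b hb hab
  set D := fun y => J y * expKernel (b * y) - J y * expKernel (a * y)
  have hD : 0 ≤ D := fun y =>
    sub_nonneg.2 (mul_le_mul_of_nonneg_left (monotoneOn_expKernel_mul_right y ha hb hab.le) (hJ y))
  have hsupp : {y | J y ≠ 0} ⊆ Function.support D ∪ {0} := by
    intro y hy
    rcases eq_or_ne y 0 with rfl | hy0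
    · exact .inr rfl
    · exact .inl (sub_pos.2 (mul_lt_mul_of_pos_left
        (strictMonoOn_expKernel_mul_right hy0 ha hb hab) ((hJ y).lt_of_ne' hy))).ne'
  have hpos : 0 < ∫ y, D y := by
    refine (integral_pos_iff_support_of_nonneg hD ((hint b hb).sub (hint a ha))).2
      (pos_iff_ne_zero.2 fun h0 => hne ?_)
    rw [ae_iff]
    exact measure_mono_null hsupp (measure_union_null h0 (measure_singleton 0))
  rw [integral_sub (hint b hb) (hint a ha)] at hpos
  exact sub_pos.1 hpos

lemma expKernelIntegral_continuousOn : ContinuousOn (expKernelIntegral J) (Ici 0) := by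
  intro l₀ hl₀
  have hl₁ : 0 ≤ l₀ + 1 := by linarith [mem_Ici.1 hl₀]
  have hnear : ∀ᶠ l in 𝓝[Ici 0] l₀, l ∈ Icc 0 (l₀ + 1) := by
    filter_upwards [self_mem_nhdsWithin,
      eventually_nhdsWithin_of_eventually_nhds (eventually_le_nhds (lt_add_one l₀))]
      with l hl hle using ⟨hl, hle⟩
  refine continuousWithinAt_of_dominated (bound := fun y => J y * expKernel ((l₀ + 1) * y))
    ?_ ?_ (hint _ hl₁) (.of_forall fun y => ?_)
  · filter_upwards [hnear] with l hl using (hint l hl.1).aestronglyMeasurable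
  · filter_upwards [hnear] with l hl
    refine .of_forall fun y => ?_
    rw [norm_of_nonneg (mul_nonneg (hJ y) (expKernel_nonneg _))]
    exact mul_le_mul_of_nonneg_left (monotoneOn_expKernel_mul_right y hl.1 hl₁ hl.2) (hJ y)
  · exact (continuous_const.mul
      (continuous_expKernel.comp (continuous_mul_const y))).continuousWithinAt

lemma tendsto_expKernelIntegral_atTop (hpos : volume ({y | J y ≠ 0} ∩ Ioi 0) ≠ 0) :
    Tendsto (expKernelIntegral J) atTop atTop := by
  set C := ∫ y in Ioi 0, J y * expKernel y
  have hC_int : IntegrableOn (fun y => J y * expKernel y) (Ioi 0) := by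
    simpa using (hint 1 zero_le_one).integrableOn
  have hC : 0 < C := by
    rw [setIntegral_pos_iff_support_of_nonneg_ae
      (.of_forall fun y => mul_nonneg (hJ y) (expKernel_nonneg y)) hC_int]
    refine pos_iff_ne_zero.2 fun h0 => hpos (measure_mono_null ?_ h0)
    rintro y ⟨hy, hy0⟩
    exact ⟨(mul_pos ((hJ y).lt_of_ne' hy) (expKernel_pos hy0)).ne', hy0⟩
  have hlower : ∀ l, 1 ≤ l → l * C ≤ expKernelIntegral J l := fun l hl => by
    have hl₀ : 0 ≤ l := zero_le_one.trans hl
    calc l * C = ∫ y in Ioi 0, l * (J y * expKernel y) := (integral_const_mul l _).symm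
      _ ≤ ∫ y in Ioi 0, J y * expKernel (l * y) := by
        refine setIntegral_mono_on (hC_int.const_mul l) (hint l hl₀).integrableOn
          measurableSet_Ioi fun y hy => ?_
        rw [mul_left_comm]
        exact mul_le_mul_of_nonneg_left (mul_expKernel_le hl (le_of_lt hy)) (hJ y)
      _ ≤ expKernelIntegral J l := setIntegral_le_integral (hint l hl₀)
        (.of_forall fun y => mul_nonneg (hJ y) (expKernel_nonneg _))
  exact tendsto_atTop_mono' _ ((eventually_ge_atTop 1).mono hlower)
    (tendsto_id.atTop_mul_const hC)

end Nonneg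

section StrictMonoOnIci

variable {G : ℝ → ℝ} (hmono : StrictMonoOn G (Ici 0)) (hG₀ : G 0 = 0)
include hmono hG₀

lemma existsUnique_pos_eq_of_strictMonoOn (hcont : ContinuousOn G (Ici 0))
    (htop : Tendsto G atTop atTop) {κ : ℝ} (hκ : 0 < κ) : ∃! l, 0 < l ∧ G l = κ := by
  obtain ⟨B, hB, hB₀⟩ := ((htop.eventually_ge_atTop κ).and (eventually_ge_atTop 0)).exists
  obtain ⟨l, hl, hGl⟩ := intermediate_value_Icc hB₀ (hcont.mono Icc_subset_Ici_self)
    ⟨hG₀.trans_le hκ.le, hB⟩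
  have hl₀ : 0 < l := hl.1.lt_of_ne <| by
    rintro rfl
    exact hκ.ne (hG₀ ▸ hGl)
  exact ⟨l, ⟨hl₀, hGl⟩, fun l' ⟨hl', hGl'⟩ => hmono.injOn hl'.le hl₀.le (hGl'.trans hGl.symm)⟩

lemma tendsto_nhdsGT_zero_of_rightInverse {L : ℝ → ℝ}
    (hL : ∀ κ, 0 < κ → 0 < L κ ∧ G (L κ) = κ) : Tendsto L (𝓝[>] 0) (𝓝 0) := by
  refine tendsto_order.2 ⟨fun a ha => eventually_nhdsWithin_of_forall fun κ hκ =>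
    ha.trans (hL κ hκ).1, fun ε hε => ?_⟩
  have hGε : 0 < G ε := hG₀ ▸ hmono self_mem_Ici hε.le hε
  filter_upwards [Ioo_mem_nhdsGT hGε] with κ hκ
  by_contra! hle
  have := hmono.monotoneOn hε.le (hL κ hκ.1).1.le hle
  linarith [(hL κ hκ.1).2, hκ.2]

end StrictMonoOnIci

theorem stmt_3
    (J : ℝ → ℝ)
    (hJnonneg : ∀ x, 0 ≤ J x)
    (hJeven : ∀ x, J (-x) = J x)
    (hJint : Integrable J)
    (hJmass : ∫ x, J x = 1)
    (hJne : ¬ (∀ᵐ x, J x = 0))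
    (hJexp : ∀ lam : ℝ, 0 < lam → Integrable (fun x => J x * Real.exp (lam * x)))
    (hJexp1 : ∀ lam : ℝ, 0 < lam → Integrable (fun x => J x * x * Real.exp (lam * x))) :
    (∀ κ : ℝ, 0 < κ → ∃! lam : ℝ, 0 < lam ∧
        lam * (∫ y, J y * y * Real.exp (lam * y)) - (∫ y, J y * Real.exp (lam * y)) + 1 = κ) ∧
    (∀ L : ℝ → ℝ,
      (∀ κ : ℝ, 0 < κ → 0 < L κ ∧
        (L κ) * (∫ y, J y * y * Real.exp (L κ * y)) - (∫ y, J y * Real.exp (L κ * y)) + 1 = κ) →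
      Tendsto L (nhdsWithin 0 (Ioi 0)) (nhds 0)) := by
  have hint : ∀ l, 0 ≤ l → Integrable fun y => J y * expKernel (l * y) := by
    intro l hl
    rcases hl.eq_or_lt with rfl | hl
    · simp
    · exact integrable_mul_expKernel hJint (hJexp l hl) (hJexp1 l hl)
  have hG : ∀ l, 0 < l → expKernelIntegral J l
      = l * (∫ y, J y * y * exp (l * y)) - (∫ y, J y * exp (l * y)) + 1 := fun l hl => by
    rw [expKernelIntegral_eq hJint (hJexp l hl) (hJexp1 l hl), hJmass]
  have hmono := expKernelIntegral_strictMonoOn hJnonneg hint hJne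
  refine ⟨fun κ hκ => ?_, fun L hL => ?_⟩
  · refine (existsUnique_congr fun l => and_congr_right fun hl => ?_).1
      (existsUnique_pos_eq_of_strictMonoOn hmono expKernelIntegral_zero
        (expKernelIntegral_continuousOn hJnonneg hint)
        (tendsto_expKernelIntegral_atTop hJnonneg hint
          (volume_support_inter_Ioi_ne_zero hJeven hJne)) hκ)
    rw [hG l hl]
  · exact tendsto_nhdsGT_zero_of_rightInverse hmono expKernelIntegral_zero fun κ hκ =>
      ⟨(hL κ hκ).1, (hG _ (hL κ hκ).1).trans (hL κ hκ).2⟩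
end

section
/- Let u : [0, ∞) × ℝ → ℝ with u and u_t continuous, u bounded below, and suppose u_t(t,x) ≥ ∫ K(x,y) u(t,y) dy + a(t,x) u(t,x) for all x ∈ ℝ, t > 0, with u(0, x) ≥ 0 for all x, where K : ℝ × ℝ → [0, ∞) is continuous with K₀ := sup_x ∫ K(x,y) dy < ∞ and a is continuous and bounded. Then u(t, x) ≥ 0 for all t > 0 and x ∈ ℝ. -/
/-!
Nonnegativity propagates over time windows of a fixed length `δ` with `(K₀ + a₀) δ < 1`.
On such a window, starting from nonnegative data, let `L ≤ 0` be a lower bound of `u`.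
Wherever `u(·, x)` is negative, `u_t ≥ K₀ L + a₀ L`; following `u(·, x)` back to the last
time it was nonnegative gives `u ≥ (K₀ + a₀) δ L`. Iterating this contraction, starting from
the lower bound of `u`, shows that `u ≥ 0` on the window.
-/

open MeasureTheory Real Set Filter Topology

theorem mul_sub_le_image_of_hasDerivAt_ge_on_neg {f f' : ℝ → ℝ} {a b c : ℝ}
    (hab : a ≤ b) (hc : c ≤ 0) (hf : ContinuousOn f (Icc a b))
    (hf' : ∀ s ∈ Ioo a b, HasDerivAt f (f' s) s)
    (ha : 0 ≤ f a) (hbound : ∀ s ∈ Ioo a b, f s < 0 → c ≤ f' s) : c * (b - a) ≤ f b := by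
  obtain ⟨s₀, ⟨⟨has₀, hs₀b⟩, hfs₀⟩, hlast⟩ : ∃ s₀, IsGreatest {s ∈ Icc a b | 0 ≤ f s} s₀ := by
    have hclosed := hf.preimage_isClosed_of_isClosed isClosed_Icc (isClosed_Ici (a := 0))
    exact (isCompact_Icc.of_isClosed_subset hclosed inter_subset_left).exists_isGreatest
      ⟨a, ⟨le_rfl, hab⟩, ha⟩
  rcases hs₀b.eq_or_lt with rfl | hs₀b
  · nlinarith
  obtain ⟨ξ, hξ, hslope⟩ := exists_hasDerivAt_eq_slope f f' hs₀b
    (hf.mono (Icc_subset_Icc_left has₀)) fun s hs => hf' s ⟨has₀.trans_lt hs.1, hs.2⟩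
  have hξneg : f ξ < 0 := by
    by_contra! h
    exact (hlast ⟨⟨has₀.trans hξ.1.le, hξ.2.le⟩, h⟩).not_gt hξ.1
  have hcξ := hbound ξ ⟨has₀.trans_lt hξ.1, hξ.2⟩ hξneg
  rw [hslope, le_div_iff₀ (sub_pos.2 hs₀b)] at hcξ
  nlinarith

theorem mul_le_integral_mul_of_le {α : Type*} [MeasurableSpace α] {μ : Measure α}
    {k g : α → ℝ} {k₀ m : ℝ} (hm : m ≤ 0) (hk : 0 ≤ᵐ[μ] k) (hki : Integrable k μ)
    (hk₀ : ∫ y, k y ∂μ ≤ k₀)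
    (hkg : Integrable (fun y => k y * g y) μ) (hg : ∀ᵐ y ∂μ, m ≤ g y) :
    k₀ * m ≤ ∫ y, k y * g y ∂μ :=
  calc k₀ * m ≤ (∫ y, k y ∂μ) * m := mul_le_mul_of_nonpos_right hk₀ hm
    _ = ∫ y, k y * m ∂μ := (integral_mul_const m k).symm
    _ ≤ ∫ y, k y * g y ∂μ := integral_mono_ae (hki.mul_const m) hkg <| by
      filter_upwards [hk, hg] with y hky hgy
      exact mul_le_mul_of_nonneg_left hgy hky

theorem nonneg_of_forall_lowerBound_mul {ι : Type*} {v : ι → ℝ} {q : ℝ} (hq₀ : 0 ≤ q)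
    (hq₁ : q < 1) (hbdd : BddBelow (range v))
    (hcontract : ∀ L ≤ 0, (∀ i, L ≤ v i) → ∀ i, q * L ≤ v i) (i : ι) : 0 ≤ v i := by
  obtain ⟨m, hm⟩ := hbdd
  have hpow : ∀ n : ℕ, ∀ i, q ^ n * min m 0 ≤ v i := by
    intro n
    induction n with
    | zero => simpa using fun i => (min_le_left m 0).trans (hm (mem_range_self i))
    | succ n ih =>
      have hL : q ^ n * min m 0 ≤ 0 :=
        mul_nonpos_of_nonneg_of_nonpos (pow_nonneg hq₀ n) (min_le_right m 0)
      simpa only [pow_succ', mul_assoc] using hcontract _ hL ih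
  have hlim : Tendsto (fun n : ℕ => q ^ n * min m 0) atTop (𝓝 0) := by
    simpa using (tendsto_pow_atTop_nhds_zero_of_lt_one hq₀ hq₁).mul_const (min m 0)
  exact le_of_tendsto' hlim fun n => hpow n i

theorem forall_nonneg_of_propagates_on_Icc {P : ℝ → Prop} {δ : ℝ} (hδ : 0 < δ)
    (h0 : P 0) (hstep : ∀ t₁, 0 ≤ t₁ → P t₁ → ∀ t ∈ Icc t₁ (t₁ + δ), P t)
    (t : ℝ) (ht : 0 ≤ t) : P t := by
  have hgrid : ∀ n : ℕ, P (n * δ) := by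
    intro n
    induction n with
    | zero => simpa using h0
    | succ n ih =>
      exact hstep _ (by positivity) ih _ ⟨by push_cast; linarith, by push_cast; linarith⟩
  have hlow : ⌊t / δ⌋₊ * δ ≤ t := (le_div_iff₀ hδ).1 (Nat.floor_le (div_nonneg ht hδ.le))
  have hhigh : t < (⌊t / δ⌋₊ + 1) * δ := (div_lt_iff₀ hδ).1 (Nat.lt_floor_add_one _)
  exact hstep _ (by positivity) (hgrid _) t ⟨hlow, by linarith⟩

theorem mul_lowerBound_le_of_lowerBound
    {K : ℝ → ℝ → ℝ} {K₀ : ℝ} {a : ℝ → ℝ → ℝ} {a₀ : ℝ} {u ut : ℝ → ℝ → ℝ}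
    (hKnonneg : ∀ x y, 0 ≤ K x y) (hKint : ∀ x, Integrable (K x))
    (hK₀ : ∀ x, (∫ y, K x y) ≤ K₀)
    (ha₀ : ∀ t x, |a t x| ≤ a₀) (hucont : ∀ x, Continuous fun t => u t x)
    (hderiv : ∀ x : ℝ, ∀ t : ℝ, 0 < t → HasDerivAt (fun τ => u τ x) (ut t x) t)
    (huint : ∀ t : ℝ, 0 < t → ∀ x : ℝ, Integrable (fun y => K x y * u t y))
    (hineq : ∀ x : ℝ, ∀ t : ℝ, 0 < t →
      (∫ y, K x y * u t y) + a t x * u t x ≤ ut t x)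
    {t₁ δ L : ℝ} (ht₁ : 0 ≤ t₁) (hstart : ∀ x, 0 ≤ u t₁ x) (hL : L ≤ 0)
    (hLu : ∀ t ∈ Icc t₁ (t₁ + δ), ∀ x, L ≤ u t x) :
    ∀ t ∈ Icc t₁ (t₁ + δ), ∀ x, (K₀ + a₀) * δ * L ≤ u t x := by
  intro t ht x
  have hKa : 0 ≤ K₀ + a₀ :=
    add_nonneg ((integral_nonneg (hKnonneg 0)).trans (hK₀ 0)) ((abs_nonneg _).trans (ha₀ 0 0))
  have hc : (K₀ + a₀) * L ≤ 0 := mul_nonpos_of_nonneg_of_nonpos hKa hL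
  have hbound : ∀ s ∈ Ioo t₁ t, u s x < 0 → (K₀ + a₀) * L ≤ ut s x := by
    intro s hs hneg
    have hs₀ : 0 < s := ht₁.trans_lt hs.1
    have hLus : ∀ y, L ≤ u s y := hLu s ⟨hs.1.le, hs.2.le.trans ht.2⟩
    have hkernel : K₀ * L ≤ ∫ y, K x y * u s y :=
      mul_le_integral_mul_of_le hL (.of_forall (hKnonneg x)) (hKint x) (hK₀ x) (huint s hs₀ x)
        (.of_forall hLus)
    have hreaction : a₀ * L ≤ a s x * u s x := by
      have := abs_le.1 (ha₀ s x)
      nlinarith [hLus x]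
    linarith [hineq x s hs₀]
  have hx := mul_sub_le_image_of_hasDerivAt_ge_on_neg ht.1 hc (hucont x).continuousOn
    (fun s hs => hderiv x s (ht₁.trans_lt hs.1)) (hstart x) hbound
  nlinarith [ht.2]

theorem stmt_7_general
    (K : ℝ → ℝ → ℝ)
    (hKnonneg : ∀ x y, 0 ≤ K x y)
    (K₀ : ℝ)
    (hKint : ∀ x, Integrable (K x))
    (hK₀ : ∀ x, (∫ y, K x y) ≤ K₀)
    (a : ℝ → ℝ → ℝ)
    (a₀ : ℝ) (ha₀ : ∀ t x, |a t x| ≤ a₀)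
    (u ut : ℝ → ℝ → ℝ)
    (hucont : Continuous fun p : ℝ × ℝ => u p.1 p.2)
    (hderiv : ∀ x : ℝ, ∀ t : ℝ, 0 < t → HasDerivAt (fun τ => u τ x) (ut t x) t)
    (hbelow : ∃ m : ℝ, ∀ t : ℝ, 0 ≤ t → ∀ x : ℝ, m ≤ u t x)
    (huint : ∀ t : ℝ, 0 < t → ∀ x : ℝ, Integrable (fun y => K x y * u t y))
    (hineq : ∀ x : ℝ, ∀ t : ℝ, 0 < t →
      (∫ y, K x y * u t y) + a t x * u t x ≤ ut t x)
    (hinit : ∀ x : ℝ, 0 ≤ u 0 x) :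
    ∀ t : ℝ, 0 < t → ∀ x : ℝ, 0 ≤ u t x := by
  obtain ⟨m, hm⟩ := hbelow
  have hKa : 0 ≤ K₀ + a₀ :=
    add_nonneg ((integral_nonneg (hKnonneg 0)).trans (hK₀ 0)) ((abs_nonneg _).trans (ha₀ 0 0))
  set δ := 1 / (K₀ + a₀ + 1)
  have hδ : 0 < δ := by positivity
  have hq : (K₀ + a₀) * δ < 1 := by
    rw [mul_one_div, div_lt_one (by positivity)]
    linarith
  have hucont' : ∀ x, Continuous fun t => u t x := fun x => hucont.comp (.prodMk_left x)
  refine fun t ht => forall_nonneg_of_propagates_on_Icc (P := fun t => ∀ x, 0 ≤ u t x)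
    hδ hinit (fun t₁ ht₁ hstart => ?_) t ht.le
  intro t ht x
  refine nonneg_of_forall_lowerBound_mul (v := fun p : Icc t₁ (t₁ + δ) × ℝ => u p.1 p.2)
    (mul_nonneg hKa hδ.le) hq ⟨m, ?_⟩ (fun L hL hLu p => ?_) (⟨t, ht⟩, x)
  · rintro _ ⟨p, rfl⟩
    exact hm _ (ht₁.trans p.1.2.1) _
  · exact mul_lowerBound_le_of_lowerBound hKnonneg hKint hK₀ ha₀ hucont' hderiv huint hineq
      ht₁ hstart hL (fun s hs y => hLu (⟨s, hs⟩, y)) p.1 p.1.2 p.2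

theorem stmt_7
    (K : ℝ → ℝ → ℝ)
    (hKcont : Continuous fun p : ℝ × ℝ => K p.1 p.2)
    (hKnonneg : ∀ x y, 0 ≤ K x y)
    (K₀ : ℝ)
    (hKint : ∀ x, Integrable (K x))
    (hK₀ : ∀ x, (∫ y, K x y) ≤ K₀)
    (a : ℝ → ℝ → ℝ)
    (hacont : Continuous fun p : ℝ × ℝ => a p.1 p.2)
    (a₀ : ℝ) (ha₀ : ∀ t x, |a t x| ≤ a₀)
    (u ut : ℝ → ℝ → ℝ)
    (hucont : Continuous fun p : ℝ × ℝ => u p.1 p.2)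
    (hutcont : Continuous fun p : ℝ × ℝ => ut p.1 p.2)
    (hderiv : ∀ x : ℝ, ∀ t : ℝ, 0 < t → HasDerivAt (fun τ => u τ x) (ut t x) t)
    (hbelow : ∃ m : ℝ, ∀ t : ℝ, 0 ≤ t → ∀ x : ℝ, m ≤ u t x)
    (huint : ∀ t : ℝ, 0 < t → ∀ x : ℝ, Integrable (fun y => K x y * u t y))
    (hineq : ∀ x : ℝ, ∀ t : ℝ, 0 < t →
      (∫ y, K x y * u t y) + a t x * u t x ≤ ut t x)
    (hinit : ∀ x : ℝ, 0 ≤ u 0 x) :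
    ∀ t : ℝ, 0 < t → ∀ x : ℝ, 0 ≤ u t x :=
  stmt_7_general K hKnonneg K₀ hKint hK₀ a a₀ ha₀ u ut hucont hderiv hbelow huint hineq hinit
end

section
/- Half-line comparison principle: let K : ℝ × ℝ → [0,∞) be continuous with sup_x ∫ K(x,y) dy < ∞, a continuous and bounded, X : [0,∞) → ℝ continuous, and u : [0,∞) × ℝ → ℝ with u, u_t continuous and u(t,x) → 0 as x → ∞ locally uniformly in t. If u_t(t,x) ≥ ∫ K(x,y) u(t,y) dy + a(t,x) u(t,x) whenever x > X(t) and t > 0, u(t,x) ≥ 0 whenever x ≤ X(t) and t > 0, and u(0,·) ≥ 0, then u(t,x) ≥ 0 for all (t,x) ∈ (0,∞) × ℝ. -/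
/-!
For `ε > 0` and `L > K₀ + a₀` consider `w = u + ε e^{Lt}`. It is positive at `t = 0`, to the
left of `X`, and (by the decay of `u`) far to the right, so if it ever vanished there would be a
first time `t₀ > 0` and a point `x₀ > X t₀` with `w (t₀, x₀) = 0 ≤ w (t₀, ·)`. There
`∂ₜ w ≤ 0`, whereas `u (t₀, ·) ≥ -ε e^{Lt₀}` and the inequality give
`∂ₜ w ≥ (L - K₀ - a₀) ε e^{Lt₀} > 0`. Hence `u > -ε e^{Lt}` for every `ε > 0`.
-/

open MeasureTheory Real Set Filter Topology

lemma neg_mul_le_integral_mul {α : Type*} [MeasurableSpace α] {μ : Measure α} {k f : α → ℝ}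
    {κ c : ℝ} (hk : ∀ y, 0 ≤ k y) (hki : Integrable k μ)
    (hkf : Integrable (fun y => k y * f y) μ) (hκ : ∫ y, k y ∂μ ≤ κ) (hc : 0 ≤ c)
    (hf : ∀ y, -c ≤ f y) :
    -(κ * c) ≤ ∫ y, k y * f y ∂μ :=
  calc -(κ * c) ≤ (∫ y, k y ∂μ) * -c := by nlinarith
    _ = ∫ y, k y * -c ∂μ := (integral_mul_const _ _).symm
    _ ≤ ∫ y, k y * f y ∂μ :=
      integral_mono (hki.mul_const _) hkf fun y => mul_le_mul_of_nonneg_left (hf y) (hk y)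

lemma HasDerivAt.nonpos_of_le_on_Ico {f : ℝ → ℝ} {f' a b : ℝ} (hf : HasDerivAt f f' b)
    (hab : a < b) (hle : ∀ t ∈ Ico a b, f b ≤ f t) : f' ≤ 0 := by
  have hslope := hasDerivWithinAt_iff_tendsto_slope.mp (hf.hasDerivWithinAt (s := Ico a b))
  rw [sdiff_singleton_eq_self (by simp)] at hslope
  have : (𝓝[Ico a b] b).NeBot := right_nhdsWithin_Ico_neBot hab
  refine le_of_tendsto hslope (eventually_nhdsWithin_of_forall fun t ht => ?_)
  rw [slope_def_field]
  exact div_nonpos_of_nonneg_of_nonpos (sub_nonneg.2 (hle t ht)) (by linarith [ht.2])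

lemma exists_first_nonpos {w : ℝ → ℝ → ℝ} (hw : Continuous fun p : ℝ × ℝ => w p.1 p.2)
    {T R : ℝ} {X : ℝ → ℝ} (hX : ContinuousOn X (Icc 0 T))
    (hright : ∀ t ∈ Icc 0 T, ∀ x, R ≤ x → 0 < w t x)
    (hleft : ∀ t ∈ Icc 0 T, ∀ x, x ≤ X t → 0 < w t x)
    {t₁ x₁ : ℝ} (ht₁ : t₁ ∈ Icc 0 T) (hx₁ : w t₁ x₁ ≤ 0) :
    ∃ t₀ ∈ Icc 0 T, ∃ x₀, w t₀ x₀ ≤ 0 ∧ ∀ t ∈ Ico 0 t₀, ∀ x, 0 < w t x := by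
  set S := {p : ℝ × ℝ | p.1 ∈ Icc 0 T ∧ w p.1 p.2 ≤ 0}
  obtain ⟨m, hm⟩ := isCompact_Icc.bddBelow_image hX
  have hSsub : S ⊆ Icc 0 T ×ˢ Icc m R := by
    rintro ⟨t, x⟩ ⟨ht, hwx⟩
    refine ⟨ht, le_of_not_gt fun hx => ?_, le_of_not_ge fun hx => ?_⟩
    · exact (hleft t ht x (hx.le.trans (hm ⟨t, ht, rfl⟩))).not_ge hwx
    · exact (hright t ht x hx).not_ge hwx
  have hS : IsCompact S := (isCompact_Icc.prod isCompact_Icc).of_isClosed_subset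
    ((isClosed_Icc.preimage continuous_fst).inter (isClosed_le hw continuous_const)) hSsub
  obtain ⟨p, hpS, hpmin⟩ := hS.exists_isMinOn ⟨(t₁, x₁), ht₁, hx₁⟩ continuous_fst.continuousOn
  refine ⟨p.1, hpS.1, p.2, hpS.2, fun t ht x => ?_⟩
  by_contra! h
  exact (hpmin (a := (t, x)) ⟨⟨ht.1, ht.2.le.trans hpS.1.2⟩, h⟩).not_gt ht.2
lemma exists_first_zero {w : ℝ → ℝ → ℝ} (hw : Continuous fun p : ℝ × ℝ => w p.1 p.2)
    {T R : ℝ} {X : ℝ → ℝ} (hX : ContinuousOn X (Icc 0 T))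
    (hright : ∀ t ∈ Icc 0 T, ∀ x, R ≤ x → 0 < w t x)
    (hleft : ∀ t ∈ Icc 0 T, ∀ x, x ≤ X t → 0 < w t x) (hinit : ∀ x, 0 < w 0 x)
    {t₁ x₁ : ℝ} (ht₁ : t₁ ∈ Icc 0 T) (hx₁ : w t₁ x₁ ≤ 0) :
    ∃ t₀ ∈ Ioc 0 T, ∃ x₀, w t₀ x₀ = 0 ∧ (∀ x, 0 ≤ w t₀ x) ∧ ∀ t ∈ Ico 0 t₀, ∀ x, 0 < w t x := by
  obtain ⟨t₀, ht₀, x₀, hx₀, hfirst⟩ := exists_first_nonpos hw hX hright hleft ht₁ hx₁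
  have ht₀pos : 0 < t₀ := ht₀.1.lt_of_ne (by rintro rfl; exact (hinit x₀).not_ge hx₀)
  have hnonneg : ∀ x, 0 ≤ w t₀ x := by
    intro x
    have hcont : Continuous fun t => w t x := hw.comp (continuous_id.prodMk continuous_const)
    refine continuousWithinAt_const.closure_le (g := fun t => w t x) ?_ hcont.continuousWithinAt
      fun t ht => (hfirst t ht x).le
    rw [closure_Ico ht₀pos.ne]
    exact right_mem_Icc.2 ht₀pos.le
  exact ⟨t₀, ⟨ht₀pos, ht₀.2⟩, x₀, le_antisymm hx₀ (hnonneg x₀), hnonneg, hfirst⟩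

lemma add_mul_exp_pos_of_supersolution
    (K : ℝ → ℝ → ℝ) (hKnonneg : ∀ x y, 0 ≤ K x y) (K₀ : ℝ)
    (hKint : ∀ x, Integrable (K x)) (hK₀ : ∀ x, (∫ y, K x y) ≤ K₀)
    (a : ℝ → ℝ → ℝ) (a₀ : ℝ) (ha₀ : ∀ t x, |a t x| ≤ a₀)
    (X : ℝ → ℝ) (hXcont : Continuous X)
    (u ut : ℝ → ℝ → ℝ) (hucont : Continuous fun p : ℝ × ℝ => u p.1 p.2)
    (hderiv : ∀ x : ℝ, ∀ t : ℝ, 0 < t → HasDerivAt (fun τ => u τ x) (ut t x) t)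
    (hlimit : ∀ T : ℝ, 0 < T → ∀ ε : ℝ, 0 < ε → ∃ R : ℝ,
      ∀ t ∈ Icc (0 : ℝ) T, ∀ x : ℝ, R ≤ x → |u t x| ≤ ε)
    (huint : ∀ t : ℝ, 0 < t → ∀ x : ℝ, Integrable (fun y => K x y * u t y))
    (hineq : ∀ t : ℝ, 0 < t → ∀ x : ℝ, X t < x →
      (∫ y, K x y * u t y) + a t x * u t x ≤ ut t x)
    (hleft : ∀ t : ℝ, 0 < t → ∀ x : ℝ, x ≤ X t → 0 ≤ u t x)
    (hinit : ∀ x : ℝ, 0 ≤ u 0 x)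
    {L ε : ℝ} (hL : K₀ + a₀ < L) (hε : 0 < ε) {T : ℝ} (hT : 0 < T) (x : ℝ) :
    0 < u T x + ε * exp (L * T) := by
  set w : ℝ → ℝ → ℝ := fun t x => u t x + ε * exp (L * t)
  have hL₀ : 0 ≤ L := by
    linarith [integral_nonneg (hKnonneg 0) |>.trans (hK₀ 0), (abs_nonneg _).trans (ha₀ 0 0)]
  have hw : Continuous fun p : ℝ × ℝ => w p.1 p.2 := hucont.add (by fun_prop)
  have hw_init : ∀ x, 0 < w 0 x := fun x => add_pos_of_nonneg_of_pos (hinit x) (by positivity)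
  have hw_left : ∀ t ∈ Icc 0 T, ∀ x, x ≤ X t → 0 < w t x := by
    rintro t ⟨ht, -⟩ x hx
    rcases ht.eq_or_lt with rfl | ht
    · exact hw_init x
    · exact add_pos_of_nonneg_of_pos (hleft t ht x hx) (by positivity)
  obtain ⟨R, hR⟩ := hlimit T hT (ε / 2) (half_pos hε)
  have hw_right : ∀ t ∈ Icc 0 T, ∀ x, R ≤ x → 0 < w t x := by
    intro t ht x hx
    have h1 : 1 ≤ exp (L * t) := one_le_exp (mul_nonneg hL₀ ht.1)
    have h2 := (abs_le.1 (hR t ht x hx)).1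
    simp only [w]
    nlinarith
  by_contra! hx
  obtain ⟨t₀, ⟨ht₀pos, ht₀T⟩, x₀, hzero, hw₀, hfirst⟩ :=
    exists_first_zero hw hXcont.continuousOn hw_right hw_left hw_init ⟨hT.le, le_rfl⟩ hx
  have hX₀ : X t₀ < x₀ :=
    lt_of_not_ge fun h => (hw_left t₀ ⟨ht₀pos.le, ht₀T⟩ x₀ h).ne' hzero
  have hderiv_w : HasDerivAt (fun t => w t x₀) (ut t₀ x₀ + ε * (exp (L * t₀) * L)) t₀ :=
    (hderiv x₀ t₀ ht₀pos).add (((hasDerivAt_const_mul L).exp).const_mul ε)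
  have hderiv_nonpos := hderiv_w.nonpos_of_le_on_Ico ht₀pos fun t ht => hzero ▸ (hfirst t ht x₀).le
  set c := ε * exp (L * t₀)
  have hc : 0 < c := by positivity
  have hu₀ : u t₀ x₀ = -c := by simp only [w] at hzero; linarith
  have hint : -(K₀ * c) ≤ ∫ y, K x₀ y * u t₀ y :=
    neg_mul_le_integral_mul (hKnonneg x₀) (hKint x₀) (huint t₀ ht₀pos x₀) (hK₀ x₀) hc.le
      fun y => by linarith [hw₀ y]
  have ha : -(a₀ * c) ≤ a t₀ x₀ * u t₀ x₀ := by
    rw [hu₀]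
    nlinarith [abs_le.1 (ha₀ t₀ x₀)]
  have hut_upper : ut t₀ x₀ ≤ -(L * c) := by
    linarith [show ε * (exp (L * t₀) * L) = L * c by ring]
  have hut_lower : -((K₀ + a₀) * c) ≤ ut t₀ x₀ := by
    linarith [hineq t₀ ht₀pos x₀ hX₀]
  linarith [mul_pos (sub_pos.2 hL) hc]

theorem stmt_8_general
    (K : ℝ → ℝ → ℝ)
    (hKnonneg : ∀ x y, 0 ≤ K x y)
    (K₀ : ℝ)
    (hKint : ∀ x, Integrable (K x))
    (hK₀ : ∀ x, (∫ y, K x y) ≤ K₀)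
    (a : ℝ → ℝ → ℝ)
    (a₀ : ℝ) (ha₀ : ∀ t x, |a t x| ≤ a₀)
    (X : ℝ → ℝ) (hXcont : Continuous X)
    (u ut : ℝ → ℝ → ℝ)
    (hucont : Continuous fun p : ℝ × ℝ => u p.1 p.2)
    (hderiv : ∀ x : ℝ, ∀ t : ℝ, 0 < t → HasDerivAt (fun τ => u τ x) (ut t x) t)
    (hlimit : ∀ T : ℝ, 0 < T → ∀ ε : ℝ, 0 < ε → ∃ R : ℝ,
      ∀ t ∈ Icc (0 : ℝ) T, ∀ x : ℝ, R ≤ x → |u t x| ≤ ε)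
    (huint : ∀ t : ℝ, 0 < t → ∀ x : ℝ, Integrable (fun y => K x y * u t y))
    (hineq : ∀ t : ℝ, 0 < t → ∀ x : ℝ, X t < x →
      (∫ y, K x y * u t y) + a t x * u t x ≤ ut t x)
    (hleft : ∀ t : ℝ, 0 < t → ∀ x : ℝ, x ≤ X t → 0 ≤ u t x)
    (hinit : ∀ x : ℝ, 0 ≤ u 0 x) :
    ∀ t : ℝ, 0 < t → ∀ x : ℝ, 0 ≤ u t x := by
  intro t ht x
  set L := K₀ + a₀ + 1
  refine le_of_forall_pos_lt_add fun δ hδ => ?_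
  have hpos := add_mul_exp_pos_of_supersolution K hKnonneg K₀ hKint hK₀ a a₀ ha₀ X hXcont u ut
    hucont hderiv hlimit huint hineq hleft hinit (lt_add_one _) (div_pos hδ (exp_pos (L * t))) ht x
  rwa [div_mul_cancel₀ _ (exp_pos _).ne'] at hpos

theorem stmt_8
    (K : ℝ → ℝ → ℝ)
    (hKcont : Continuous fun p : ℝ × ℝ => K p.1 p.2)
    (hKnonneg : ∀ x y, 0 ≤ K x y)
    (K₀ : ℝ)
    (hKint : ∀ x, Integrable (K x))
    (hK₀ : ∀ x, (∫ y, K x y) ≤ K₀)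
    (a : ℝ → ℝ → ℝ)
    (hacont : Continuous fun p : ℝ × ℝ => a p.1 p.2)
    (a₀ : ℝ) (ha₀ : ∀ t x, |a t x| ≤ a₀)
    (X : ℝ → ℝ) (hXcont : Continuous X)
    (u ut : ℝ → ℝ → ℝ)
    (hucont : Continuous fun p : ℝ × ℝ => u p.1 p.2)
    (hutcont : Continuous fun p : ℝ × ℝ => ut p.1 p.2)
    (hderiv : ∀ x : ℝ, ∀ t : ℝ, 0 < t → HasDerivAt (fun τ => u τ x) (ut t x) t)
    (hlimit : ∀ T : ℝ, 0 < T → ∀ ε : ℝ, 0 < ε → ∃ R : ℝ,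
      ∀ t ∈ Icc (0 : ℝ) T, ∀ x : ℝ, R ≤ x → |u t x| ≤ ε)
    (huint : ∀ t : ℝ, 0 < t → ∀ x : ℝ, Integrable (fun y => K x y * u t y))
    (hineq : ∀ t : ℝ, 0 < t → ∀ x : ℝ, X t < x →
      (∫ y, K x y * u t y) + a t x * u t x ≤ ut t x)
    (hleft : ∀ t : ℝ, 0 < t → ∀ x : ℝ, x ≤ X t → 0 ≤ u t x)
    (hinit : ∀ x : ℝ, 0 ≤ u 0 x) :
    ∀ t : ℝ, 0 < t → ∀ x : ℝ, 0 ≤ u t x :=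
  stmt_8_general K hKnonneg K₀ hKint hK₀ a a₀ ha₀ X hXcont u ut hucont hderiv hlimit huint hineq
    hleft hinit
end

section
/- Bounded oscillation from a Lipschitz-in-time bound: let u : ℝ × ℝ → (0,1) be continuous, strictly decreasing in x with u(t,−∞)=1, u(t,∞)=0, and with |u_t| ≤ C̄ everywhere; suppose also there are c₊, c₋, h₊, h₋ > 0 and a C¹ function X : ℝ → ℝ with derivative in [c_min, c_max] ⊂ (0,∞) such that u(t, x + X(t) + h₊) ≤ e^{−c₊ x} for x ≥ 0 and u(t, x + X(t) − h₋) ≥ 1 − e^{c₋ x} for x ≤ 0 for all t. Let θ ∈ (0,1) and define X_θ(t) by u(t, X_θ(t)) = θ. Then for every δ > 0, sup_{|t−s|≤δ} |X_θ(t) − X_θ(s)| < ∞. -/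
/-!
The exponential tail estimates trap the level set `Xθ` in a strip of fixed width around the
interface `X`, and `X` is `cmax`-Lipschitz by the mean value theorem. Hence over `|t - s| ≤ δ`
the level set moves by at most twice the width of the strip plus `cmax * δ`.
-/

open Real Set Filter

namespace StrictAnti

variable {f : ℝ → ℝ} {a c θ y : ℝ}

theorem le_add_of_le_exp_neg (hf : StrictAnti f) (hc : 0 < c) (hθ : 0 < θ)
    (hupper : ∀ x, 0 ≤ x → f (x + a) ≤ exp (-c * x)) (hy : f y = θ) :
    y ≤ max 0 (-log θ / c) + a := by
  set x₀ := max 0 (-log θ / c)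
  have hexp : exp (-c * x₀) ≤ θ := by
    have : -log θ ≤ c * x₀ := (div_le_iff₀' hc).1 (le_max_right _ _)
    rw [← exp_log hθ, exp_le_exp]
    linarith
  exact hf.le_iff_ge.1 <| hy ▸ (hupper x₀ (le_max_left _ _)).trans hexp

theorem add_le_of_one_sub_exp_le (hf : StrictAnti f) (hc : 0 < c) (hθ : θ < 1)
    (hlower : ∀ x, x ≤ 0 → 1 - exp (c * x) ≤ f (x + a)) (hy : f y = θ) :
    min 0 (log (1 - θ) / c) + a ≤ y := by
  set x₁ := min 0 (log (1 - θ) / c)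
  have hexp : exp (c * x₁) ≤ 1 - θ := by
    rw [← exp_log (sub_pos.2 hθ), exp_le_exp]
    exact (le_div_iff₀' hc).1 (min_le_right _ _)
  refine hf.le_iff_ge.1 (hy ▸ le_trans ?_ (hlower x₁ (min_le_left _ _)))
  linarith

theorem abs_sub_le_of_exp_tails {cp cm hp hm : ℝ} (hf : StrictAnti f) (hcp : 0 < cp)
    (hcm : 0 < cm) (hθ : θ ∈ Ioo 0 1)
    (hupper : ∀ x, 0 ≤ x → f (x + a + hp) ≤ exp (-cp * x))
    (hlower : ∀ x, x ≤ 0 → 1 - exp (cm * x) ≤ f (x + a - hm)) (hy : f y = θ) :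
    |y - a| ≤ max (max 0 (-log θ / cp) + hp) (hm - min 0 (log (1 - θ) / cm)) := by
  have hle := hf.le_add_of_le_exp_neg (a := a + hp) hcp hθ.1
    (fun x hx => add_assoc x a hp ▸ hupper x hx) hy
  have hge := hf.add_le_of_one_sub_exp_le (a := a - hm) hcm hθ.2
    (fun x hx => add_sub_assoc x a hm ▸ hlower x hx) hy
  exact abs_le.2 ⟨by linarith [le_max_right (max 0 (-log θ / cp) + hp) (hm - min 0 (log (1 - θ) / cm))],
    by linarith [le_max_left (max 0 (-log θ / cp) + hp) (hm - min 0 (log (1 - θ) / cm))]⟩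

end StrictAnti

theorem abs_sub_le_of_hasDerivAt_mem_Icc {X X' : ℝ → ℝ} {cmin cmax : ℝ} (hcmin : 0 ≤ cmin)
    (hX : ∀ t, HasDerivAt X (X' t) t) (hX' : ∀ t, X' t ∈ Icc cmin cmax) (t s : ℝ) :
    |X t - X s| ≤ cmax * |t - s| :=
  convex_univ.norm_image_sub_le_of_norm_hasDerivWithin_le (fun x _ => (hX x).hasDerivWithinAt)
    (fun x _ => abs_le.2 ⟨by linarith [(hX' x).1, (hX' x).2], (hX' x).2⟩) (mem_univ s) (mem_univ t)

theorem abs_sub_le_of_abs_sub_le {g X : ℝ → ℝ} {M K : ℝ} (hg : ∀ t, |g t - X t| ≤ M)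
    (hX : ∀ t s, |X t - X s| ≤ K * |t - s|) (t s : ℝ) :
    |g t - g s| ≤ 2 * M + K * |t - s| :=
  calc |g t - g s| = |(g t - X t) + (X t - X s) - (g s - X s)| := by ring_nf
    _ ≤ |g t - X t| + |X t - X s| + |g s - X s| := (abs_sub _ _).trans (add_le_add_left (abs_add_le _ _) _)
    _ ≤ 2 * M + K * |t - s| := by linarith [hg t, hg s, hX t s]

theorem stmt_13_general
    (u : ℝ → ℝ → ℝ)
    (huanti : ∀ t, StrictAnti (u t))
    (cp cm hp hm cmin cmax : ℝ)
    (hcp : 0 < cp) (hcm : 0 < cm)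
    (hcmin : 0 < cmin)
    (X X' : ℝ → ℝ)
    (hX : ∀ t, HasDerivAt X (X' t) t)
    (hX' : ∀ t, X' t ∈ Icc cmin cmax)
    (hupper : ∀ t : ℝ, ∀ x : ℝ, 0 ≤ x → u t (x + X t + hp) ≤ Real.exp (-cp * x))
    (hlower : ∀ t : ℝ, ∀ x : ℝ, x ≤ 0 → 1 - Real.exp (cm * x) ≤ u t (x + X t - hm))
    (θ : ℝ) (hθ : θ ∈ Ioo (0 : ℝ) 1)
    (Xθ : ℝ → ℝ) (hXθ : ∀ t, u t (Xθ t) = θ) :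
    ∀ δ : ℝ, 0 < δ → ∃ C : ℝ, ∀ t s : ℝ, |t - s| ≤ δ → |Xθ t - Xθ s| ≤ C := by
  intro δ _
  obtain ⟨M, hstrip⟩ : ∃ M, ∀ t, |Xθ t - X t| ≤ M :=
    ⟨_, fun t => (huanti t).abs_sub_le_of_exp_tails hcp hcm hθ (hupper t) (hlower t) (hXθ t)⟩
  have hlip := abs_sub_le_of_hasDerivAt_mem_Icc hcmin.le hX hX'
  refine ⟨2 * M + cmax * δ, fun t s hts => (abs_sub_le_of_abs_sub_le hstrip hlip t s).trans ?_⟩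
  have hcmax : 0 ≤ cmax := hcmin.le.trans (hX' 0).1 |>.trans (hX' 0).2
  gcongr

theorem stmt_13
    (u ut : ℝ → ℝ → ℝ)
    (hucont : Continuous fun p : ℝ × ℝ => u p.1 p.2)
    (hurange : ∀ t x, u t x ∈ Ioo (0 : ℝ) 1)
    (huanti : ∀ t, StrictAnti (u t))
    (hu_atBot : ∀ t, Tendsto (u t) atBot (nhds 1))
    (hu_atTop : ∀ t, Tendsto (u t) atTop (nhds 0))
    (Cbar : ℝ)
    (hderiv : ∀ t x : ℝ, HasDerivAt (fun τ => u τ x) (ut t x) t)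
    (hCbar : ∀ t x, |ut t x| ≤ Cbar)
    (cp cm hp hm cmin cmax : ℝ)
    (hcp : 0 < cp) (hcm : 0 < cm) (hhp : 0 < hp) (hhm : 0 < hm)
    (hcmin : 0 < cmin) (hcmincmax : cmin ≤ cmax)
    (X X' : ℝ → ℝ)
    (hX : ∀ t, HasDerivAt X (X' t) t)
    (hX' : ∀ t, X' t ∈ Icc cmin cmax)
    (hupper : ∀ t : ℝ, ∀ x : ℝ, 0 ≤ x → u t (x + X t + hp) ≤ Real.exp (-cp * x))
    (hlower : ∀ t : ℝ, ∀ x : ℝ, x ≤ 0 → 1 - Real.exp (cm * x) ≤ u t (x + X t - hm))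
    (θ : ℝ) (hθ : θ ∈ Ioo (0 : ℝ) 1)
    (Xθ : ℝ → ℝ) (hXθ : ∀ t, u t (Xθ t) = θ) :
    ∀ δ : ℝ, 0 < δ → ∃ C : ℝ, ∀ t s : ℝ, |t - s| ≤ δ → |Xθ t - Xθ s| ≤ C :=
  stmt_13_general u huanti cp cm hp hm cmin cmax hcp hcm hcmin X X' hX hX' hupper hlower θ hθ Xθ hXθ
end

section
/- Modification of a continuous function with linear-in-time lower propagation bound: let X : [s, ∞) → ℝ be continuous, and suppose there are constants c_B > 0, t_B ≥ 0, C₀ ≥ 1, c₀ > c_B/2, and a function Y : [s,∞) → ℝ with |X(t) − Y(t)| ≤ C₀ for all t, Y(t) − Y(t₀) ≤ c₀(t − t₀) for t ≥ t₀ ≥ s, and X(t) − X(t₀) ≥ (3c_B/4)(t − t₀ − t_B) for t ≥ t₀ ≥ s. Then there exists a strictly increasing sequence s = T₀ < T₁ < T₂ < ⋯ with T_n − T_{n−1} ∈ [2/(2c₀ − c_B), 4(2C₀+1)/c_B + 3t_B] for all n, such that for each n, X(t) < X(T_{n−1}) + 2C₀ + 1 + (c_B/2)(t − T_{n−1}) for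 t ∈ [T_{n−1}, T_n) and X(T_n) = X(T_{n−1}) + 2C₀ + 1 + (c_B/2)(T_n − T_{n−1}). -/
/-!
Starting from `T₀`, wait until `X` first meets the line of slope `cB / 2` that starts `2 C₀ + 1`
above `X T₀`. The lower propagation bound makes `X` reach this line within time
`4 (2 C₀ + 1) / cB + 3 tB`, since `3 cB / 4 > cB / 2`. Through `Y`, `X` gains at most
`2 C₀ + c₀ Δ` in time `Δ`, so it cannot reach the line before time `2 / (2 c₀ - cB)`.
Continuity provides a first hitting time, and iterating this step gives the sequence.
-/

open Set

theorem ContinuousOn.exists_first_zero {f : ℝ → ℝ} {a b : ℝ} (hab : a ≤ b)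
    (hf : ContinuousOn f (Icc a b)) (ha : f a < 0) (hb : 0 ≤ f b) :
    ∃ c ∈ Ioc a b, f c = 0 ∧ ∀ t ∈ Ico a c, f t < 0 := by
  set A := Icc a b ∩ f ⁻¹' Ici 0
  have hA : IsClosed A := hf.preimage_isClosed_of_isClosed isClosed_Icc isClosed_Ici
  have hbdd : BddBelow A := ⟨a, fun t ht => ht.1.1⟩
  have hcA : sInf A ∈ A := hA.csInf_mem ⟨b, ⟨hab, le_rfl⟩, hb⟩ hbdd
  obtain ⟨⟨hac, hcb⟩, hfc⟩ := hcA
  have hbelow : ∀ t ∈ Ico a (sInf A), f t < 0 := fun t ⟨hat, htc⟩ =>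
    not_le.mp fun hft => (csInf_le hbdd ⟨⟨hat, htc.le.trans hcb⟩, hft⟩).not_gt htc
  have hac' : a < sInf A := hac.lt_of_ne fun h => (h ▸ ha).not_ge hfc
  obtain ⟨d, hd, hfd⟩ := intermediate_value_Icc hac (hf.mono (Icc_subset_Icc_right hcb))
    ⟨ha.le, hfc⟩
  have hdc : d = sInf A :=
    le_antisymm hd.2 (csInf_le hbdd ⟨⟨hd.1, hd.2.trans hcb⟩, hfd.ge⟩)
  exact ⟨sInf A, ⟨hac', hcb⟩, hdc ▸ hfd, hbelow⟩

theorem exists_seq_of_forall_exists_rel {α : Type*} {p : α → Prop} {r : α → α → Prop} {a : α}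
    (ha : p a) (h : ∀ x, p x → ∃ y, p y ∧ r x y) :
    ∃ f : ℕ → α, f 0 = a ∧ ∀ n, r (f n) (f (n + 1)) := by
  choose! g hpg hrg using h
  have hp : ∀ n, p (g^[n] a) := by
    intro n
    induction n with
    | zero => exact ha
    | succ n ih => rw [Function.iterate_succ_apply']; exact hpg _ ih
  refine ⟨fun n => g^[n] a, rfl, fun n => ?_⟩
  simp only [Function.iterate_succ_apply']
  exact hrg _ (hp n)

theorem exists_first_hitting_time {s cB tB C₀ c₀ : ℝ} {X Y : ℝ → ℝ} (hcB : 0 < cB) (hc₀ : cB / 2 < c₀)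
    (hXcont : ContinuousOn X (Ici s))
    (hXY : ∀ t : ℝ, s ≤ t → |X t - Y t| ≤ C₀)
    (hY : ∀ t₀ t : ℝ, s ≤ t₀ → t₀ ≤ t → Y t - Y t₀ ≤ c₀ * (t - t₀))
    (hX : ∀ t₀ t : ℝ, s ≤ t₀ → t₀ ≤ t → (3 * cB / 4) * (t - t₀ - tB) ≤ X t - X t₀)
    {T₀ : ℝ} (hT₀ : s ≤ T₀) :
    ∃ T₁, T₀ < T₁ ∧ T₁ - T₀ ∈ Icc (2 / (2 * c₀ - cB)) (4 * (2 * C₀ + 1) / cB + 3 * tB) ∧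
      (∀ t ∈ Ico T₀ T₁, X t < X T₀ + 2 * C₀ + 1 + (cB / 2) * (t - T₀)) ∧
      X T₁ = X T₀ + 2 * C₀ + 1 + (cB / 2) * (T₁ - T₀) := by
  set U := 4 * (2 * C₀ + 1) / cB + 3 * tB
  have htB : 0 ≤ tB := by nlinarith [hX T₀ T₀ hT₀ le_rfl]
  have hC₀ : 0 ≤ C₀ := (abs_nonneg _).trans (hXY s le_rfl)
  have hU : 0 ≤ U := by positivity
  have hreach : 2 * C₀ + 1 + cB / 2 * U ≤ X (T₀ + U) - X T₀ := by
    have hline : (3 * cB / 4) * (T₀ + U - T₀ - tB) = 2 * C₀ + 1 + cB / 2 * U := by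
      simp only [U]; field_simp; ring
    linarith [hX T₀ (T₀ + U) hT₀ (by linarith)]
  have hcont : ContinuousOn (fun t => X t - (X T₀ + 2 * C₀ + 1 + (cB / 2) * (t - T₀)))
      (Icc T₀ (T₀ + U)) :=
    (hXcont.mono fun t ht => hT₀.trans ht.1).sub (by fun_prop)
  obtain ⟨T₁, ⟨hT₀T₁, hT₁U⟩, hhit, hbelow⟩ :=
    hcont.exists_first_zero (by linarith) (by linarith) (by linarith)
  have hlower : 2 / (2 * c₀ - cB) ≤ T₁ - T₀ := by
    have hXT₀ := abs_le.mp (hXY T₀ hT₀)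
    have hXT₁ := abs_le.mp (hXY T₁ (hT₀.trans hT₀T₁.le))
    have hYT₁ := hY T₀ T₁ hT₀ hT₀T₁.le
    rw [div_le_iff₀ (by linarith)]
    linarith
  exact ⟨T₁, hT₀T₁, ⟨hlower, by linarith⟩, fun t ht => sub_neg.mp (hbelow t ht),
    sub_eq_zero.mp hhit⟩

theorem stmt_14_general
    (s cB tB C₀ c₀ : ℝ)
    (hcB : 0 < cB) (hc₀ : cB / 2 < c₀)
    (X Y : ℝ → ℝ)
    (hXcont : ContinuousOn X (Ici s))
    (hXY : ∀ t : ℝ, s ≤ t → |X t - Y t| ≤ C₀)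
    (hY : ∀ t₀ t : ℝ, s ≤ t₀ → t₀ ≤ t → Y t - Y t₀ ≤ c₀ * (t - t₀))
    (hX : ∀ t₀ t : ℝ, s ≤ t₀ → t₀ ≤ t → (3 * cB / 4) * (t - t₀ - tB) ≤ X t - X t₀) :
    ∃ T : ℕ → ℝ, T 0 = s ∧ StrictMono T ∧
      (∀ n : ℕ, T (n + 1) - T n ∈
        Icc (2 / (2 * c₀ - cB)) (4 * (2 * C₀ + 1) / cB + 3 * tB)) ∧
      (∀ n : ℕ, ∀ t : ℝ, t ∈ Ico (T n) (T (n + 1)) →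
        X t < X (T n) + 2 * C₀ + 1 + (cB / 2) * (t - T n)) ∧
      (∀ n : ℕ, X (T (n + 1)) = X (T n) + 2 * C₀ + 1 + (cB / 2) * (T (n + 1) - T n)) := by
  obtain ⟨T, hT0, hstep⟩ := exists_seq_of_forall_exists_rel (p := (s ≤ ·)) le_rfl
    fun T₀ hT₀ => (exists_first_hitting_time hcB hc₀ hXcont hXY hY hX hT₀).imp
      fun T₁ hT₁ => ⟨hT₀.trans hT₁.1.le, hT₁⟩
  exact ⟨T, hT0, strictMono_nat_of_lt_succ fun n => (hstep n).1, fun n => (hstep n).2.1,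
    fun n => (hstep n).2.2.1, fun n => (hstep n).2.2.2⟩

theorem stmt_14
    (s cB tB C₀ c₀ : ℝ)
    (hcB : 0 < cB) (htB : 0 ≤ tB) (hC₀ : 1 ≤ C₀) (hc₀ : cB / 2 < c₀)
    (X Y : ℝ → ℝ)
    (hXcont : ContinuousOn X (Ici s))
    (hXY : ∀ t : ℝ, s ≤ t → |X t - Y t| ≤ C₀)
    (hY : ∀ t₀ t : ℝ, s ≤ t₀ → t₀ ≤ t → Y t - Y t₀ ≤ c₀ * (t - t₀))
    (hX : ∀ t₀ t : ℝ, s ≤ t₀ → t₀ ≤ t → (3 * cB / 4) * (t - t₀ - tB) ≤ X t - X t₀) :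
    ∃ T : ℕ → ℝ, T 0 = s ∧ StrictMono T ∧
      (∀ n : ℕ, T (n + 1) - T n ∈
        Icc (2 / (2 * c₀ - cB)) (4 * (2 * C₀ + 1) / cB + 3 * tB)) ∧
      (∀ n : ℕ, ∀ t : ℝ, t ∈ Ico (T n) (T (n + 1)) →
        X t < X (T n) + 2 * C₀ + 1 + (cB / 2) * (t - T n)) ∧
      (∀ n : ℕ, X (T (n + 1)) = X (T n) + 2 * C₀ + 1 + (cB / 2) * (T (n + 1) - T n)) :=
  stmt_14_general s cB tB C₀ c₀ hcB hc₀ X Y hXcont hXY hY hX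
end
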